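/- arXiv:1603.04415 — 7 statements merged into one kernel-verified Lean document; each statement's English description precedes it below -/
import Mathlib

section
/- Let f be a conjunctive Boolean network on n variables whose dependency graph D is strongly connected. A state x ∈ F₂ⁿ is a fixed point of f if and only if all entries x₁,…,xₙ hold the same value (i.e., x is the all-zeros or all-ones state). -/
/-- A walk of length `ℓ` from `a` to `b` in the digraph with edge relation `E`. -/
def IsWalk {V : Type*} (E : V → V → Prop) (w : ℕ → V) (ℓ : ℕ) (a b : V) : Prop :=
  w 0 = a ∧ w ℓ = b ∧ ∀ i < ℓ, E (w i) (w (i + 1))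

/-- A digraph is strongly connected if any vertex can reach any other by a walk. -/
def StronglyConnected {V : Type*} (E : V → V → Prop) : Prop :=
  ∀ a b : V, ∃ w ℓ, IsWalk E w ℓ a b

/-- A cycle of length `ℓ`: a closed walk with no repeated vertices other than start/end. -/
def IsCycle {V : Type*} (E : V → V → Prop) (w : ℕ → V) (ℓ : ℕ) : Prop :=
  0 < ℓ ∧ w ℓ = w 0 ∧ (∀ i < ℓ, E (w i) (w (i + 1))) ∧
    ∀ i j, i < ℓ → j < ℓ → w i = w j → i = j

/-- `RelP E p a b` (written `a ∼ₚ b`): some walk from `a` to `b` has length divisible by `p`. -/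
def RelP {V : Type*} (E : V → V → Prop) (p : ℕ) (a b : V) : Prop :=
  ∃ w ℓ, IsWalk E w ℓ a b ∧ p ∣ ℓ

/-- The conjunctive Boolean network with in-neighbor sets `N`: coordinate `i` updates
to the AND (product over `F₂`) of the variables indexed by `N i`. -/
noncomputable def cbn {n : ℕ} (N : Fin n → Finset (Fin n)) (x : Fin n → Bool) : Fin n → Bool :=
  fun i => (N i).inf x

/-- The dependency graph of the conjunctive Boolean network: edge `j → i` iff `j ∈ N i`. -/
def depEdge {n : ℕ} (N : Fin n → Finset (Fin n)) (j i : Fin n) : Prop := j ∈ N i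

/-- A state of a conjunctive Boolean network with strongly connected dependency graph
is a fixed point iff all its entries hold the same value. -/
theorem fixed_point_iff_constant {n : ℕ} (N : Fin n → Finset (Fin n))
    (hne : ∀ i, (N i).Nonempty)
    (hsc : StronglyConnected (depEdge N)) (x : Fin n → Bool) :
    cbn N x = x ↔ ∀ i j, x i = x j := by
  constructor
  · intro hfix
    -- false propagates along edges
    have hedge : ∀ j i, depEdge N j i → x j = false → x i = false := by
      intro j i hji hj
      have : cbn N x i = x i := congrFun hfix i
      have hle : (N i).inf x ≤ x j := Finset.inf_le hji
      rw [hj] at hle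
      have : x i ≤ false := by rw [← this]; exact hle
      exact le_bot_iff.mp this
    -- false propagates along walks
    have hwalk : ∀ ℓ (w : ℕ → Fin n) a b, IsWalk (depEdge N) w ℓ a b → x a = false → x b = false := by
      intro ℓ
      induction ℓ with
      | zero => intro w a b ⟨h0, hl, _⟩ ha; rw [← hl, h0]; exact ha
      | succ ℓ ih =>
        intro w a b ⟨h0, hl, hstep⟩ ha
        have hb' : x (w ℓ) = false :=
          ih w a (w ℓ) ⟨h0, rfl, fun i hi => hstep i (Nat.lt_succ_of_lt hi)⟩ ha
        rw [← hl]
        exact hedge (w ℓ) (w (ℓ+1)) (hstep ℓ (Nat.lt_succ_self ℓ)) hb'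
    intro i j
    by_cases hi : x i = false
    · obtain ⟨w, ℓ, hw⟩ := hsc i j
      rw [hi, hwalk ℓ w i j hw hi]
    · by_cases hj : x j = false
      · obtain ⟨w, ℓ, hw⟩ := hsc j i
        exact absurd (hwalk ℓ w j i hw hj) hi
      · rw [Bool.not_eq_false] at hi hj; rw [hi, hj]
  · intro hconst
    funext i
    show (N i).inf x = x i
    obtain ⟨k, hk⟩ := hne i
    have : ∀ j ∈ N i, x j = x i := fun j _ => hconst j i
    calc (N i).inf x = (N i).inf (fun _ => x i) := Finset.inf_congr rfl this
      _ = x i := Finset.inf_const ⟨k, hk⟩ _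
end

section
/- Let D be a strongly connected digraph and let p be a positive integer dividing the length of every cycle of D. Define the relation vᵢ ∼ₚ vⱼ iff there exists a directed walk from vᵢ to vⱼ whose length is divisible by p. Then ∼ₚ is an equivalence relation on the vertex set of D (reflexive, symmetric, and transitive). -/
/-- Concatenation of walks. -/
lemma isWalk_append {V : Type*} {E : V → V → Prop} {w1 w2 : ℕ → V} {ℓ1 ℓ2 : ℕ} {a b c : V}
    (h1 : IsWalk E w1 ℓ1 a b) (h2 : IsWalk E w2 ℓ2 b c) :
    IsWalk E (fun k => if k ≤ ℓ1 then w1 k else w2 (k - ℓ1)) (ℓ1 + ℓ2) a c := by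
  obtain ⟨ha1, hb1, he1⟩ := h1
  obtain ⟨ha2, hb2, he2⟩ := h2
  refine ⟨by simp [ha1], ?_, ?_⟩
  · rcases Nat.eq_zero_or_pos ℓ2 with h | h
    · subst h; simpa using hb1.trans (ha2.symm.trans hb2)
    · have : ¬ ℓ1 + ℓ2 ≤ ℓ1 := by omega
      simp only [this, if_neg, Nat.add_sub_cancel_left]
      exact hb2
  · intro i hi
    rcases lt_trichotomy i ℓ1 with h | h | h
    · have h1' : i ≤ ℓ1 := h.le
      have h2' : i + 1 ≤ ℓ1 := h
      simp only [if_pos h1', if_pos h2']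
      exact he1 i h
    · subst h
      have h2' : ¬ i + 1 ≤ i := by omega
      simp only [le_refl, if_pos, if_neg h2', Nat.add_sub_cancel_left]
      have hℓ2 : 0 < ℓ2 := by omega
      have := he2 0 hℓ2
      rwa [ha2, ← hb1] at this
    · have h1' : ¬ i ≤ ℓ1 := by omega
      have h2' : ¬ i + 1 ≤ ℓ1 := by omega
      simp only [if_neg h1', if_neg h2']
      have : i + 1 - ℓ1 = (i - ℓ1) + 1 := by omega
      rw [this]
      exact he2 (i - ℓ1) (by omega)

/-- Every closed walk has length divisible by `p`. -/
lemma closed_walk_div {V : Type*} {E : V → V → Prop} {p : ℕ}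
    (hdiv : ∀ w ℓ, IsCycle E w ℓ → p ∣ ℓ) :
    ∀ ℓ : ℕ, ∀ w : ℕ → V, w ℓ = w 0 → (∀ i < ℓ, E (w i) (w (i + 1))) → p ∣ ℓ := by
  intro ℓ
  induction ℓ using Nat.strong_induction_on with
  | _ ℓ IH =>
    intro w hclosed hedges
    rcases Nat.eq_zero_or_pos ℓ with h0 | h0
    · simp [h0]
    by_cases hinj : ∀ i j, i < ℓ → j < ℓ → w i = w j → i = j
    · exact hdiv w ℓ ⟨h0, hclosed, hedges, hinj⟩
    · push_neg at hinj
      obtain ⟨i, j, hi, hj, heq, hne⟩ := hinj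
      -- WLOG i < j
      wlog hij : i < j generalizing i j
      · exact this j i hj hi heq.symm (Ne.symm hne) (by omega)
      -- inner closed walk from i to j, length j - i
      have hinner : p ∣ j - i := by
        refine IH (j - i) (by omega) (fun k => w (i + k)) ?_ ?_
        · simp only [Nat.add_sub_cancel' hij.le, Nat.add_zero]
          exact heq.symm
        · intro k hk
          show E (w (i + k)) (w (i + (k + 1)))
          have : i + (k + 1) = i + k + 1 := by omega
          rw [this]
          exact hedges (i + k) (by omega)
      -- outer closed walk skipping [i, j], length ℓ - (j - i)
      have houter : p ∣ ℓ - (j - i) := by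
        refine IH (ℓ - (j - i)) (by omega)
          (fun k => if k ≤ i then w k else w (k + (j - i))) ?_ ?_
        · have h1 : ¬ ℓ - (j - i) ≤ i := by omega
          have h2 : ℓ - (j - i) + (j - i) = ℓ := by omega
          simp only [if_neg h1, h2, Nat.le_zero, zero_le, if_pos]
          exact hclosed
        · intro k hk
          rcases lt_trichotomy k i with h | h | h
          · simp only [if_pos h.le, if_pos (show k + 1 ≤ i from h)]
            exact hedges k (by omega)
          · have h2' : ¬ k + 1 ≤ i := by omega
            simp only [if_pos h.le, if_neg h2']
            have : k + 1 + (j - i) = j + 1 := by omega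
            rw [this, h, heq]
            exact hedges j hj
          · have h1' : ¬ k ≤ i := by omega
            have h2' : ¬ k + 1 ≤ i := by omega
            simp only [if_neg h1', if_neg h2']
            have : k + 1 + (j - i) = k + (j - i) + 1 := by omega
            rw [this]
            exact hedges (k + (j - i)) (by omega)
      have : ℓ = (ℓ - (j - i)) + (j - i) := by omega
      rw [this]
      exact Nat.dvd_add houter hinner

/-- If `p` divides the length of every cycle of a strongly connected digraph, then
`∼ₚ` is an equivalence relation (reflexive, symmetric, transitive). -/
theorem relp_equivalence {V : Type*} [Fintype V] (E : V → V → Prop)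
    (hsc : StronglyConnected E) (p : ℕ) (hp : 0 < p)
    (hdiv : ∀ w ℓ, IsCycle E w ℓ → p ∣ ℓ) :
    Equivalence (RelP E p) := by
  constructor
  · -- reflexive
    intro a
    exact ⟨fun _ => a, 0, ⟨rfl, rfl, fun i hi => absurd hi (Nat.not_lt_zero i)⟩, dvd_zero p⟩
  · -- symmetric
    rintro a b ⟨w, ℓ, hw, hℓ⟩
    obtain ⟨w', ℓ', hw'⟩ := hsc b a
    -- concatenated walk a → b → a is closed, so p ∣ ℓ + ℓ', hence p ∣ ℓ'
    have hcat := isWalk_append hw hw'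
    obtain ⟨hc0, hcℓ, hce⟩ := hcat
    have hclosed : (fun k => if k ≤ ℓ then w k else w' (k - ℓ)) (ℓ + ℓ') =
        (fun k => if k ≤ ℓ then w k else w' (k - ℓ)) 0 := by
      rw [hc0, hcℓ]
    have hdvd : p ∣ ℓ + ℓ' := closed_walk_div hdiv (ℓ + ℓ') _ hclosed hce
    have : p ∣ ℓ' := (Nat.dvd_add_right hℓ).mp hdvd
    exact ⟨w', ℓ', hw', this⟩
  · -- transitive
    rintro a b c ⟨w1, ℓ1, hw1, h1⟩ ⟨w2, ℓ2, hw2, h2⟩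
    exact ⟨_, ℓ1 + ℓ2, isWalk_append hw1 hw2, Nat.dvd_add h1 h2⟩
end

section
/- Let D be a strongly connected digraph and p a positive integer dividing all cycle lengths. Fix a vertex v₀ and choose vertices v₁,…,v_{p−1} with v_{k+1} an out-neighbor of v_k for each k. Then the equivalence classes [v₀]ₚ, [v₁]ₚ, …, [v_{p−1}]ₚ under ∼ₚ are pairwise disjoint and their union is the entire vertex set V. -/
/-- Concatenation of walks. -/
lemma walk_append {V : Type*} {E : V → V → Prop} {ℓ1 ℓ2 : ℕ} {a b c : V}
    (h1 : ∃ w, IsWalk E w ℓ1 a b) (h2 : ∃ w, IsWalk E w ℓ2 b c) :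
    ∃ w, IsWalk E w (ℓ1 + ℓ2) a c := by
  obtain ⟨w1, ha, hb, he1⟩ := h1
  obtain ⟨w2, hb2, hc, he2⟩ := h2
  refine ⟨fun t => if t < ℓ1 then w1 t else w2 (t - ℓ1), ?_, ?_, ?_⟩
  · by_cases h : 0 < ℓ1
    · simpa [h] using ha
    · have hl0 : ℓ1 = 0 := by omega
      subst hl0
      show (if (0:ℕ) < 0 then w1 0 else w2 (0 - 0)) = a
      rw [if_neg (lt_irrefl 0), Nat.sub_zero, hb2, ← hb]
      exact ha
  · have : ¬ (ℓ1 + ℓ2 < ℓ1) := by omega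
    simp only [this, if_false]
    rw [show ℓ1 + ℓ2 - ℓ1 = ℓ2 by omega, hc]
  · intro t ht
    by_cases h1' : t + 1 < ℓ1
    · simp only [if_pos (by omega : t < ℓ1), if_pos h1']
      exact he1 t (by omega)
    · by_cases h2' : t < ℓ1
      · -- t + 1 = ℓ1
        have heq : t + 1 = ℓ1 := by omega
        simp only [if_pos h2', if_neg (by omega : ¬ t + 1 < ℓ1)]
        rw [show t + 1 - ℓ1 = 0 by omega, hb2, ← hb, ← heq]
        exact he1 t (by omega)
      · simp only [if_neg h2', if_neg (by omega : ¬ t + 1 < ℓ1)]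
        rw [show t + 1 - ℓ1 = t - ℓ1 + 1 by omega]
        exact he2 (t - ℓ1) (by omega)

/-- Any closed walk has length divisible by `p`, given that all cycles do. -/
lemma closed_dvd {V : Type*} {E : V → V → Prop} {p : ℕ}
    (hdiv : ∀ w ℓ, IsCycle E w ℓ → p ∣ ℓ) :
    ∀ ℓ, ∀ w : ℕ → V, w ℓ = w 0 → (∀ i < ℓ, E (w i) (w (i + 1))) → p ∣ ℓ := by
  intro ℓ
  induction ℓ using Nat.strong_induction_on with
  | _ ℓ ih =>
    intro w hcl he
    rcases Nat.eq_zero_or_pos ℓ with h0 | hpos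
    · simp [h0]
    by_cases hinj : ∀ i j, i < ℓ → j < ℓ → w i = w j → i = j
    · exact hdiv w ℓ ⟨hpos, hcl, he, hinj⟩
    push_neg at hinj
    obtain ⟨i, j, hi, hj, heq, hne⟩ := hinj
    wlog hij : i < j generalizing i j
    · exact this j i hj hi heq.symm (Ne.symm hne) (by omega)
    have h1 : p ∣ (j - i) := by
      apply ih (j - i) (by omega) (fun t => w (i + t))
      · simp only [Nat.add_zero]
        rw [show i + (j - i) = j by omega, heq]
      · intro t ht
        have := he (i + t) (by omega)
        rwa [show i + t + 1 = i + (t + 1) by omega] at this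
    have h2 : p ∣ (ℓ - (j - i)) := by
      apply ih (ℓ - (j - i)) (by omega)
        (fun t => if t ≤ i then w t else w (t + (j - i)))
      · have hgt : ¬ (ℓ - (j - i) ≤ i) := by omega
        simp only [hgt, if_false, if_pos (Nat.zero_le i)]
        rw [show ℓ - (j - i) + (j - i) = ℓ by omega, hcl]
      · intro t ht
        by_cases hc1 : t + 1 ≤ i
        · simp only [if_pos (by omega : t ≤ i), if_pos hc1]
          exact he t (by omega)
        · by_cases hc2 : t ≤ i
          · have hti : t = i := by omega
            simp only [if_pos hc2, if_neg hc1]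
            rw [hti, heq, show i + 1 + (j - i) = j + 1 by omega]
            exact he j (by omega)
          · simp only [if_neg hc2, if_neg (by omega : ¬ t + 1 ≤ i)]
            rw [show t + 1 + (j - i) = t + (j - i) + 1 by omega]
            exact he (t + (j - i)) (by omega)
    have := Nat.dvd_add h1 h2
    rwa [show j - i + (ℓ - (j - i)) = ℓ by omega] at this

/-- Walks along the chain. -/
lemma chain_walk {V : Type*} {E : V → V → Prop} {p : ℕ} {v : ℕ → V}
    (hchain : ∀ k, k + 1 < p → E (v k) (v (k + 1))) :
    ∀ d i, i + d < p → ∃ w, IsWalk E w d (v i) (v (i + d)) := by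
  intro d
  induction d with
  | zero => exact fun i _ => ⟨fun _ => v i, rfl, rfl, fun t ht => by omega⟩
  | succ d ihd =>
    intro i hi
    have step : ∃ w, IsWalk E w 1 (v (i + d)) (v (i + d + 1)) := by
      refine ⟨fun t => if t = 0 then v (i + d) else v (i + d + 1), rfl, rfl, ?_⟩
      intro t ht
      have : t = 0 := by omega
      subst this
      simpa using hchain (i + d) (by omega)
    have := walk_append (ihd i (by omega)) step
    rwa [show i + d + 1 = i + (d + 1) from rfl] at this

/-- Given a chain `v 0 → v 1 → ⋯ → v (p-1)` of consecutive out-neighbors, the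
equivalence classes `[v k]ₚ` are pairwise disjoint and cover the whole vertex set. -/
theorem classes_partition {V : Type*} [Fintype V] (E : V → V → Prop)
    (hsc : StronglyConnected E) (p : ℕ) (hp : 0 < p)
    (hdiv : ∀ w ℓ, IsCycle E w ℓ → p ∣ ℓ)
    (v : ℕ → V) (hchain : ∀ k, k + 1 < p → E (v k) (v (k + 1))) :
    (∀ i j, i < p → j < p → i ≠ j →
      ∀ u : V, RelP E p u (v i) → ¬ RelP E p u (v j)) ∧
      (∀ u : V, ∃ k < p, RelP E p u (v k)) := by
  have key : ∀ i j, i < j → j < p → ∀ u : V, RelP E p u (v i) → RelP E p u (v j) → False := by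
    intro i j hij hj u ⟨wa, a, hwa, hpa⟩ ⟨wb, b, hwb, hpb⟩
    obtain ⟨wm, m, hwm⟩ := hsc (v j) u
    -- closed walk u → v j → u of length b + m
    have hcb : p ∣ b + m := by
      obtain ⟨w, hw0, hwend, hwe⟩ := walk_append ⟨wb, hwb⟩ ⟨wm, hwm⟩
      exact closed_dvd hdiv (b + m) w (by rw [hwend, hw0]) hwe
    -- closed walk u → v i → v j → u of length a + (j - i) + m
    have hca : p ∣ a + (j - i) + m := by
      have hcw : ∃ w, IsWalk E w (j - i) (v i) (v j) := by
        have := chain_walk hchain (j - i) i (by omega)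
        rwa [show i + (j - i) = j by omega] at this
      obtain ⟨w, hw0, hwend, hwe⟩ :=
        walk_append (walk_append ⟨wa, hwa⟩ hcw) ⟨wm, hwm⟩
      exact closed_dvd hdiv (a + (j - i) + m) w (by rw [hwend, hw0]) hwe
    have hm : p ∣ m := by
      have := Nat.dvd_sub hcb hpb
      rwa [show b + m - b = m by omega] at this
    have hji : p ∣ j - i := by
      have h1 := Nat.dvd_sub hca hpa
      rw [show a + (j - i) + m - a = (j - i) + m by omega] at h1
      have h2 := Nat.dvd_sub h1 hm
      rwa [show (j - i) + m - m = j - i by omega] at h2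
    have := Nat.le_of_dvd (by omega) hji
    omega
  constructor
  · intro i j hi hj hne u hui huj
    rcases Nat.lt_or_ge i j with h | h
    · exact key i j h hj u hui huj
    · exact key j i (by omega) hi u huj hui
  · intro u
    obtain ⟨wm, m, hwm⟩ := hsc u (v 0)
    have hmlt : m % p < p := Nat.mod_lt m hp
    have hmle : m % p ≤ m := Nat.mod_le m p
    have mk : ∀ k, k < p → p ∣ m + k → ∃ k' < p, RelP E p u (v k') := by
      intro k hk hdk
      have hcw : ∃ w, IsWalk E w k (v 0) (v k) := by
        have := chain_walk hchain k 0 (by omega)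
        simpa using this
      obtain ⟨w, hw⟩ := walk_append ⟨wm, hwm⟩ hcw
      exact ⟨k, hk, w, m + k, hw, hdk⟩
    rcases Nat.eq_zero_or_pos (m % p) with h0 | hpos
    · exact mk 0 hp (by simpa using Nat.dvd_of_mod_eq_zero h0)
    · refine mk (p - m % p) (by omega) ?_
      have heq : m + (p - m % p) = (m - m % p) + p := by omega
      rw [heq]
      exact Nat.dvd_add (Nat.dvd_sub_mod m) dvd_rfl
end

section
/- Let D be a strongly connected digraph with loop number p* (the gcd of all cycle lengths). Each irreducible component G_k of D is strongly connected. -/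
/-- Edge relation of the irreducible component containing the class of `v0`:
an edge `u → u'` exists iff `u, u'` both lie in the class `[v0]` and there is a walk
of length exactly `p` from `u` to `u'` in the original digraph. -/
def compEdgeIn {V : Type*} (E : V → V → Prop) (p : ℕ) (v0 : V) (u u' : V) : Prop :=
  RelP E p u v0 ∧ RelP E p u' v0 ∧ ∃ w, IsWalk E w p u u'

lemma walk_append_s4 {V : Type*} {E : V → V → Prop} {w1 w2 : ℕ → V} {m n : ℕ} {a b c : V}
    (h1 : IsWalk E w1 m a b) (h2 : IsWalk E w2 n b c) :
    IsWalk E (fun k => if k ≤ m then w1 k else w2 (k - m)) (m + n) a c := by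
  obtain ⟨h10, h1m, h1e⟩ := h1
  obtain ⟨h20, h2n, h2e⟩ := h2
  refine ⟨by simp [h10], ?_, ?_⟩
  · rcases Nat.eq_zero_or_pos n with hn | hn
    · subst hn; simp [h1m, ← h2n, h20]
    · have h : ¬ (m + n ≤ m) := by omega
      simp [h, h2n]
  · intro k hk
    show E (if k ≤ m then w1 k else w2 (k - m)) (if k + 1 ≤ m then w1 (k + 1) else w2 (k + 1 - m))
    rcases lt_trichotomy k m with h | h | h
    · have hk1 : k + 1 ≤ m := h
      simp only [le_of_lt h, hk1, if_true]
      exact h1e k h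
    · subst h
      have hn : 0 < n := by omega
      have h2 : ¬ (k + 1 ≤ k) := by omega
      simp only [le_refl, if_true, h2, if_false]
      have h3 : k + 1 - k = 1 := by omega
      rw [h3, h1m, ← h20]
      exact h2e 0 hn
    · have h1 : ¬ (k ≤ m) := by omega
      have h2 : ¬ (k + 1 ≤ m) := by omega
      simp only [h1, h2, if_false]
      have h3 : k + 1 - m = (k - m) + 1 := by omega
      rw [h3]
      exact h2e (k - m) (by omega)

lemma closed_walk_dvd {V : Type*} {E : V → V → Prop} {p : ℕ}
    (hdiv : ∀ w ℓ, IsCycle E w ℓ → p ∣ ℓ) :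
    ∀ ℓ (w : ℕ → V) (a : V), IsWalk E w ℓ a a → p ∣ ℓ := by
  intro ℓ
  induction ℓ using Nat.strong_induction_on with
  | _ ℓ ih =>
    intro w a hw
    obtain ⟨hw0, hwl, hwe⟩ := hw
    rcases Nat.eq_zero_or_pos ℓ with h0 | h0
    · simp [h0]
    by_cases hinj : ∀ i j, i < ℓ → j < ℓ → w i = w j → i = j
    · exact hdiv w ℓ ⟨h0, by rw [hwl, hw0], hwe, hinj⟩
    · push_neg at hinj
      obtain ⟨i0, j0, hi0, hj0, hij0, hne0⟩ := hinj
      obtain ⟨i, j, hi, hj, hij, hlt⟩ :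
          ∃ i j, i < ℓ ∧ j < ℓ ∧ w i = w j ∧ i < j := by
        rcases Nat.lt_or_ge i0 j0 with h | h
        · exact ⟨i0, j0, hi0, hj0, hij0, h⟩
        · exact ⟨j0, i0, hj0, hi0, hij0.symm, by omega⟩
      have hinner : p ∣ (j - i) := by
        apply ih (j - i) (by omega) (fun k => w (i + k)) (w i)
        refine ⟨by simp, ?_, ?_⟩
        · show w (i + (j - i)) = w i
          have h : i + (j - i) = j := by omega
          rw [h]; exact hij.symm
        · intro k hk
          show E (w (i + k)) (w (i + (k + 1)))
          have h : i + (k + 1) = (i + k) + 1 := by omega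
          rw [h]
          exact hwe (i + k) (by omega)
      have houter : p ∣ (ℓ - (j - i)) := by
        apply ih (ℓ - (j - i)) (by omega)
          (fun k => if k ≤ i then w k else w (k + (j - i))) a
        refine ⟨by simp [hw0], ?_, ?_⟩
        · show (if ℓ - (j - i) ≤ i then w (ℓ - (j - i)) else w (ℓ - (j - i) + (j - i))) = a
          have h1 : ¬ (ℓ - (j - i) ≤ i) := by omega
          have h2 : ℓ - (j - i) + (j - i) = ℓ := by omega
          simp only [h1, if_false, h2, hwl]
        · intro k hk
          show E (if k ≤ i then w k else w (k + (j - i)))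
            (if k + 1 ≤ i then w (k + 1) else w (k + 1 + (j - i)))
          rcases lt_trichotomy k i with h | h | h
          · have hk1 : k + 1 ≤ i := h
            simp only [le_of_lt h, hk1, if_true]
            exact hwe k (by omega)
          · have h2 : ¬ (k + 1 ≤ i) := by omega
            rw [if_pos h.le, if_neg h2, h]
            have h3 : i + 1 + (j - i) = j + 1 := by omega
            rw [h3, hij]
            exact hwe j hj
          · have h1 : ¬ (k ≤ i) := by omega
            have h2 : ¬ (k + 1 ≤ i) := by omega
            simp only [h1, h2, if_false]
            have h3 : k + 1 + (j - i) = (k + (j - i)) + 1 := by omega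
            rw [h3]
            exact hwe (k + (j - i)) (by omega)
      have h : ℓ = (ℓ - (j - i)) + (j - i) := by omega
      rw [h]
      exact Nat.dvd_add houter hinner

/-- Each irreducible component of a strongly connected digraph (with loop number `p`)
is strongly connected: any two vertices of the component are joined by a walk
within the component. -/
theorem component_strongly_connected {V : Type*} [Fintype V] (E : V → V → Prop)
    (hsc : StronglyConnected E) (p : ℕ) (hp : 0 < p)
    (hdiv : ∀ w ℓ, IsCycle E w ℓ → p ∣ ℓ)
    (hgcd : ∀ q, (∀ w ℓ, IsCycle E w ℓ → q ∣ ℓ) → q ∣ p)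
    (v0 : V) (u u' : V) (hu : RelP E p u v0) (hu' : RelP E p u' v0) :
    ∃ w ℓ, IsWalk (compEdgeIn E p v0) w ℓ u u' := by
  obtain ⟨w1, a1, hw1, hda⟩ := hu
  obtain ⟨w2, b1, hw2, hdb⟩ := hu'
  obtain ⟨w3, c1, hw3⟩ := hsc v0 u
  obtain ⟨w4, d1, hw4⟩ := hsc u u'
  have hac : p ∣ a1 + c1 := closed_walk_dvd hdiv _ _ u (walk_append_s4 hw1 hw3)
  have hc : p ∣ c1 := by
    have := Nat.dvd_sub hac hda
    simpa using this
  have hdbc : p ∣ d1 + b1 + c1 :=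
    closed_walk_dvd hdiv _ _ u (walk_append_s4 (walk_append_s4 hw4 hw2) hw3)
  have hd : p ∣ d1 := by
    have hbc : p ∣ b1 + c1 := Nat.dvd_add hdb hc
    have h1 : p ∣ d1 + (b1 + c1) := by rwa [← add_assoc]
    have := Nat.dvd_sub h1 hbc
    simpa using this
  obtain ⟨m, hm⟩ := hd
  obtain ⟨hw40, hw4d, hw4e⟩ := hw4
  have hmp : d1 = m * p := by rw [hm, Nat.mul_comm]
  have hclass : ∀ i ≤ m, RelP E p (w4 (i * p)) v0 := by
    intro i him
    have hile : i * p ≤ d1 := by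
      rw [hmp]; exact Nat.mul_le_mul_right p him
    have htail : IsWalk E (fun k => w4 (i * p + k)) (d1 - i * p) (w4 (i * p)) u' := by
      refine ⟨by simp, ?_, ?_⟩
      · show w4 (i * p + (d1 - i * p)) = u'
        have h : i * p + (d1 - i * p) = d1 := by omega
        rw [h]; exact hw4d
      · intro k hk
        show E (w4 (i * p + k)) (w4 (i * p + (k + 1)))
        have h : i * p + (k + 1) = (i * p + k) + 1 := by omega
        rw [h]
        exact hw4e (i * p + k) (by omega)
    refine ⟨_, _, walk_append_s4 htail hw2, ?_⟩
    have h1 : p ∣ d1 - i * p := Nat.dvd_sub ⟨m, hm⟩ ⟨i, by ring⟩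
    exact Nat.dvd_add h1 hdb
  refine ⟨fun i => w4 (i * p), m, ?_, ?_, ?_⟩
  · simpa using hw40
  · show w4 (m * p) = u'
    rw [← hmp]; exact hw4d
  · intro i himS
    refine ⟨hclass i (by omega), hclass (i + 1) (by omega), fun k => w4 (i * p + k), ?_⟩
    refine ⟨by simp, ?_, ?_⟩
    · show w4 (i * p + p) = w4 ((i + 1) * p)
      have h : i * p + p = (i + 1) * p := by ring
      rw [h]
    · intro k hk
      show E (w4 (i * p + k)) (w4 (i * p + (k + 1)))
      have h : i * p + (k + 1) = (i * p + k) + 1 := by omega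
      rw [h]
      apply hw4e (i * p + k)
      have h1 : (i + 1) * p ≤ m * p := Nat.mul_le_mul_right p (by omega)
      have h2 : i * p + p = (i + 1) * p := by ring
      omega
end

section
/- Let D be a strongly connected digraph with loop number p*. If D contains a cycle of length nᵢ, then each irreducible component G_k of D contains a cycle of length nᵢ/p*. -/
lemma IsWalk.append {V : Type*} {E : V → V → Prop} {w1 w2 : ℕ → V} {ℓ1 ℓ2 : ℕ} {a b c : V}
    (h1 : IsWalk E w1 ℓ1 a b) (h2 : IsWalk E w2 ℓ2 b c) :
    IsWalk E (fun i => if i < ℓ1 then w1 i else w2 (i - ℓ1)) (ℓ1 + ℓ2) a c := by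
  obtain ⟨ha1, hb1, he1⟩ := h1
  obtain ⟨ha2, hb2, he2⟩ := h2
  refine ⟨?_, ?_, ?_⟩
  · by_cases h : 0 < ℓ1
    · simp [h, ha1]
    · have hl : ℓ1 = 0 := by omega
      subst hl
      show (if (0:ℕ) < 0 then w1 0 else w2 (0 - 0)) = a
      rw [if_neg (lt_irrefl 0)]
      rw [Nat.sub_zero, ha2, ← hb1]
      exact ha1
  · have h : ¬ (ℓ1 + ℓ2 < ℓ1) := by omega
    simp [h, hb2]
  · intro i hi
    by_cases h1' : i + 1 < ℓ1
    · have h0 : i < ℓ1 := by omega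
      simp only [if_pos h0, if_pos h1']
      exact he1 i h0
    · by_cases h0 : i < ℓ1
      · have he : i + 1 = ℓ1 := by omega
        simp only [if_pos h0, if_neg h1']
        have : i + 1 - ℓ1 = 0 := by omega
        rw [this, ha2]
        have h5 := he1 i h0
        rwa [he, hb1] at h5
      · have h2' : ¬ (i + 1 < ℓ1) := by omega
        simp only [if_neg h0, if_neg h2']
        have e1 : i + 1 - ℓ1 = (i - ℓ1) + 1 := by omega
        rw [e1]
        exact he2 (i - ℓ1) (by omega)

/-- If `D` contains a cycle of length `ni`, then each irreducible component
contains a cycle of length `ni / p` (where `p` is the loop number). -/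
theorem component_contains_cycle {V : Type*} [Fintype V] (E : V → V → Prop)
    (hsc : StronglyConnected E) (p : ℕ) (hp : 0 < p)
    (hdiv : ∀ w ℓ, IsCycle E w ℓ → p ∣ ℓ)
    (hgcd : ∀ q, (∀ w ℓ, IsCycle E w ℓ → q ∣ ℓ) → q ∣ p)
    (v0 : V) (w : ℕ → V) (ni : ℕ) (hc : IsCycle E w ni) :
    ∃ w', IsCycle (compEdgeIn E p v0) w' (ni / p) := by
  classical
  obtain ⟨hni0, hclose, hedge, hinj⟩ := hc
  have hni : p ∣ ni := hdiv w ni ⟨hni0, hclose, hedge, hinj⟩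
  set m := ni / p with hm
  have hmp : m * p = ni := Nat.div_mul_cancel hni
  have hm0 : 0 < m := by
    rcases Nat.eq_zero_or_pos m with h | h
    · rw [h, zero_mul] at hmp; omega
    · exact h
  set W : ℕ → V := fun i => w (i % ni) with hW
  have Wcongr : ∀ a b : ℕ, a % ni = b % ni → W a = W b := by
    intro a b h; simp only [hW, h]
  have Wedge : ∀ i, E (W i) (W (i + 1)) := by
    intro i
    have hk : i % ni < ni := Nat.mod_lt _ hni0
    have h1 : W (i + 1) = W (i % ni + 1) := by
      apply Wcongr
      conv_lhs => rw [Nat.add_mod]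
      conv_rhs => rw [Nat.add_mod, Nat.mod_mod_of_dvd _ dvd_rfl]
    rw [h1]
    by_cases h2 : i % ni + 1 < ni
    · have e1 : W (i % ni + 1) = w (i % ni + 1) := by
        simp only [hW]; rw [Nat.mod_eq_of_lt h2]
      rw [e1]
      exact hedge _ hk
    · have h3 : i % ni + 1 = ni := by omega
      have e1 : W (i % ni + 1) = w 0 := by
        simp only [hW, h3, Nat.mod_self]
      rw [e1, ← hclose, ← h3]
      exact hedge _ hk
  have Wwalk : ∀ q d : ℕ, IsWalk E (fun k => W (q + k)) d (W q) (W (q + d)) := by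
    intro q d
    refine ⟨by simp, rfl, fun i _ => ?_⟩
    have := Wedge (q + i)
    simpa [Nat.add_assoc] using this
  obtain ⟨β, s, hβ⟩ := hsc (w 0) v0
  set r := s % p with hr
  have hrp : r < p := Nat.mod_lt _ hp
  have relp : ∀ q : ℕ, q % p = s % p → RelP E p (W q) v0 := by
    intro q hq
    set d := ni - q % ni with hd
    have hqlt : q % ni < ni := Nat.mod_lt _ hni0
    have hq1 : (q + d) % ni = 0 := by
      have hdm := Nat.div_add_mod q ni
      have e1 : q + d = ni * (q / ni) + ni := by omega
      rw [e1, Nat.mul_add_mod, Nat.mod_self]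
    have hWqd : W (q + d) = w 0 := by simp only [hW, hq1]
    have hwalk1 := Wwalk q d
    rw [hWqd] at hwalk1
    have happ := IsWalk.append hwalk1 hβ
    refine ⟨_, d + s, happ, ?_⟩
    have h1 : q % ni % p = q % p := Nat.mod_mod_of_dvd q hni
    have hz : (p : ℤ) ∣ (s : ℤ) - ((q % ni : ℕ) : ℤ) := by
      have hmeq : (q % ni) ≡ s [MOD p] := by
        unfold Nat.ModEq; rw [h1, hq]
      exact_mod_cast hmeq.dvd
    have hzn : (p : ℤ) ∣ ((ni : ℕ) : ℤ) - ((q % ni : ℕ) : ℤ) + (s : ℤ) := by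
      have h3 : ((ni : ℕ) : ℤ) - ((q % ni : ℕ) : ℤ) + (s : ℤ)
          = ((ni : ℕ) : ℤ) + ((s : ℤ) - ((q % ni : ℕ) : ℤ)) := by ring
      rw [h3]
      exact dvd_add (Int.natCast_dvd_natCast.mpr hni) hz
    have hcast : ((d + s : ℕ) : ℤ) = ((ni : ℕ) : ℤ) - ((q % ni : ℕ) : ℤ) + (s : ℤ) := by
      have : ((d : ℕ) : ℤ) = ((ni : ℕ) : ℤ) - ((q % ni : ℕ) : ℤ) := by
        rw [hd]; rw [Nat.cast_sub (le_of_lt hqlt)]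
      push_cast
      push_cast at this
      omega
    have : (p : ℤ) ∣ ((d + s : ℕ) : ℤ) := by rw [hcast]; exact hzn
    exact_mod_cast this
  have hres : ∀ i : ℕ, (r + i * p) % p = s % p := by
    intro i
    rw [Nat.add_mul_mod_self_right, hr, Nat.mod_mod_of_dvd _ dvd_rfl]
  have hlt : ∀ i : ℕ, i < m → r + i * p < ni := by
    intro i hi
    have e1 : m * p = (m - 1) * p + p := by
      have h2 : m = (m - 1) + 1 := by omega
      calc m * p = ((m - 1) + 1) * p := by rw [← h2]
        _ = (m - 1) * p + p := by ring
    have e2 : i * p ≤ (m - 1) * p := Nat.mul_le_mul_right _ (by omega)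
    omega
  refine ⟨fun j => W (r + j * p), hm0, ?_, ?_, ?_⟩
  · -- W (r + m * p) = W (r + 0 * p)
    apply Wcongr
    have e1 : r + m * p = (r + 0 * p) + ni := by rw [hmp]; ring
    rw [e1, Nat.add_mod_right]
  · intro i hi
    refine ⟨relp _ (hres i), relp _ (hres (i + 1)), ⟨fun k => W (r + i * p + k), ?_, ?_, fun k _ => ?_⟩⟩
    · simp
    · apply Wcongr; congr 1; ring
    · have := Wedge (r + i * p + k)
      simpa [Nat.add_assoc] using this
  · intro i j hi hj hij
    have li := hlt i hi
    have lj := hlt j hj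
    have ei : W (r + i * p) = w (r + i * p) := by
      simp only [hW]; rw [Nat.mod_eq_of_lt li]
    have ej : W (r + j * p) = w (r + j * p) := by
      simp only [hW]; rw [Nat.mod_eq_of_lt lj]
    have hij' : W (r + i * p) = W (r + j * p) := hij
    rw [ei, ej] at hij'
    have := hinj _ _ li lj hij'
    have hij2 : i * p = j * p := by omega
    exact Nat.eq_of_mul_eq_mul_right hp hij2
end

section
/- Let f be a conjunctive Boolean network with strongly connected dependency graph D, loop number p*, and irreducible components with vertex sets U_0,…,U_{p*−1}. A state x ∈ F₂ⁿ lies in a periodic orbit of f (i.e., f^m(x) = x for some m ≥ 1) if and only if, for each k = 0,…,p*−1, all entries of x restricted to U_k are equal. -/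
/-!
`(cbn N)^[m] x i` is the conjunction of `x j` over all `j` with a walk of length `m` from `j`
to `i`. If `x` is constant on the classes of `∼ₚ`, every such `j` with `m = p` is in the class
of `i`, so `x` is fixed by `(cbn N)^[p]`. Conversely, closed walks decompose into cycles, so the
closed walk lengths at a vertex form a submonoid of `ℕ` with gcd `p`; hence all large multiples
of `p` are such lengths. Padding a walk of length divisible by `p` with closed walks yields a
walk whose length is a multiple of any given period of `x`, along which `true` is transported backwards.
-/

open Function

section Walks

variable {V : Type*} {E : V → V → Prop}

def HasWalk (E : V → V → Prop) (ℓ : ℕ) (a b : V) : Prop :=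
  ∃ w, IsWalk E w ℓ a b

lemma hasWalk_zero {a b : V} : HasWalk E 0 a b ↔ a = b :=
  ⟨fun ⟨_, h0, h1, _⟩ => h0.symm.trans h1, fun h => ⟨fun _ => a, rfl, h, by simp⟩⟩

lemma hasWalk_succ {ℓ : ℕ} {a c : V} :
    HasWalk E (ℓ + 1) a c ↔ ∃ b, E a b ∧ HasWalk E ℓ b c := by
  constructor
  · rintro ⟨w, h0, h1, hs⟩
    exact ⟨w 1, h0 ▸ hs 0 ℓ.succ_pos, fun t => w (t + 1), rfl, h1,
      fun i hi => hs (i + 1) (by omega)⟩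
  · rintro ⟨b, hab, w, h0, h1, hs⟩
    refine ⟨fun t => Nat.casesOn t a w, rfl, h1, fun i hi => ?_⟩
    cases i with
    | zero => simpa [h0] using hab
    | succ i => exact hs i (by omega)

lemma HasWalk.append {ℓ₁ ℓ₂ : ℕ} {a b c : V} (h₁ : HasWalk E ℓ₁ a b) (h₂ : HasWalk E ℓ₂ b c) :
    HasWalk E (ℓ₁ + ℓ₂) a c := by
  induction ℓ₁ generalizing a with
  | zero => rwa [hasWalk_zero.1 h₁, zero_add]
  | succ ℓ ih =>
    obtain ⟨a', ha, h⟩ := hasWalk_succ.1 h₁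
    rw [Nat.succ_add]
    exact hasWalk_succ.2 ⟨a', ha, ih h⟩

lemma IsWalk.hasWalk_segment {w : ℕ → V} {ℓ i j : ℕ} {a b : V} (hw : IsWalk E w ℓ a b)
    (hij : i ≤ j) (hj : j ≤ ℓ) : HasWalk E (j - i) (w i) (w j) :=
  ⟨fun t => w (i + t), rfl, congrArg w (Nat.add_sub_cancel' hij),
    fun t ht => hw.2.2 (i + t) (by omega)⟩

lemma exists_hasWalk_of_forall_exists_adj (h : ∀ b, ∃ a, E a b) (ℓ : ℕ) (c : V) :
    ∃ a, HasWalk E ℓ a c := by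
  induction ℓ with
  | zero => exact ⟨c, hasWalk_zero.2 rfl⟩
  | succ ℓ ih =>
    obtain ⟨b, hb⟩ := ih
    obtain ⟨a, hab⟩ := h b
    exact ⟨a, hasWalk_succ.2 ⟨b, hab, hb⟩⟩

variable {p : ℕ}

/-- A closed walk that is not a cycle revisits a vertex; cutting out the closed subwalk between
the two visits leaves two shorter closed walks. -/
lemma HasWalk.dvd_of_closed (hdiv : ∀ w ℓ, IsCycle E w ℓ → p ∣ ℓ) {ℓ : ℕ} {a : V}
    (h : HasWalk E ℓ a a) : p ∣ ℓ := by
  induction ℓ using Nat.strong_induction_on generalizing a with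
  | _ ℓ ih =>
    obtain ⟨w, h0, h1, hs⟩ := h
    have hw : IsWalk E w ℓ a a := ⟨h0, h1, hs⟩
    rcases Nat.eq_zero_or_pos ℓ with rfl | hpos
    · exact dvd_zero p
    by_cases hinj : ∀ i j, i < ℓ → j < ℓ → w i = w j → i = j
    · exact hdiv w ℓ ⟨hpos, h1.trans h0.symm, hs, hinj⟩
    push Not at hinj
    obtain ⟨i, j, hi, hj, hwij, hne⟩ := hinj
    wlog hlt : i < j generalizing i j
    · exact this j i hj hi hwij.symm hne.symm (by omega)
    have inner : HasWalk E (j - i) (w i) (w i) := hwij ▸ hw.hasWalk_segment hlt.le hj.le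
    have outer : HasWalk E (i + (ℓ - j)) a a := by
      have h₁ := hw.hasWalk_segment (Nat.zero_le i) hi.le
      have h₂ := hw.hasWalk_segment hj.le le_rfl
      rw [h0, Nat.sub_zero, hwij] at h₁
      rw [h1] at h₂
      exact h₁.append h₂
    have hsum : ℓ = (j - i) + (i + (ℓ - j)) := by omega
    rw [hsum]
    exact dvd_add (ih _ (by omega) inner) (ih _ (by omega) outer)

lemma RelP.symm (hsc : StronglyConnected E) (hdiv : ∀ w ℓ, IsCycle E w ℓ → p ∣ ℓ) {a b : V}
    (h : RelP E p a b) : RelP E p b a := by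
  obtain ⟨w, ℓ, hw, hpℓ⟩ := h
  obtain ⟨w', ℓ', hw'⟩ := hsc b a
  have hclosed : p ∣ ℓ + ℓ' := (HasWalk.append ⟨w, hw⟩ ⟨w', hw'⟩).dvd_of_closed hdiv
  exact ⟨w', ℓ', hw', (Nat.dvd_add_right hpℓ).1 hclosed⟩

variable (E) in
def closedWalkLengths (b : V) : AddSubmonoid ℕ where
  carrier := {ℓ | HasWalk E ℓ b b}
  zero_mem' := hasWalk_zero.2 rfl
  add_mem' := HasWalk.append

variable (hsc : StronglyConnected E) (hdiv : ∀ w ℓ, IsCycle E w ℓ → p ∣ ℓ)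
  (hgcd : ∀ q, (∀ w ℓ, IsCycle E w ℓ → q ∣ ℓ) → q ∣ p)
include hsc hdiv hgcd

/-- Every cycle length is the difference of two closed walk lengths at `b`: go from `b` to the
cycle and back, with and without a turn around the cycle. -/
lemma setGcd_closedWalkLengths (b : V) :
    Nat.setGcd (closedWalkLengths E b : Set ℕ) = p := by
  refine Nat.dvd_antisymm (hgcd _ fun w ℓ hc => ?_)
    (Nat.dvd_setGcd_iff.2 fun ℓ hℓ => HasWalk.dvd_of_closed hdiv hℓ)
  obtain ⟨w₁, ℓ₁, hw₁⟩ := hsc b (w 0)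
  obtain ⟨w₂, ℓ₂, hw₂⟩ := hsc (w 0) b
  have hcycle : HasWalk E ℓ (w 0) (w 0) := ⟨w, rfl, hc.2.1, hc.2.2.1⟩
  have hshort : ℓ₁ + ℓ₂ ∈ closedWalkLengths E b := HasWalk.append ⟨w₁, hw₁⟩ ⟨w₂, hw₂⟩
  have hlong : ℓ₁ + ℓ + ℓ₂ ∈ closedWalkLengths E b :=
    (HasWalk.append ⟨w₁, hw₁⟩ hcycle).append ⟨w₂, hw₂⟩
  have := Nat.dvd_sub (Nat.setGcd_dvd_of_mem hlong) (Nat.setGcd_dvd_of_mem hshort)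
  rwa [Nat.add_right_comm, Nat.add_sub_cancel_left] at this

lemma exists_forall_ge_hasWalk_self (b : V) :
    ∃ K, ∀ ℓ ≥ K, p ∣ ℓ → HasWalk E ℓ b b := by
  obtain ⟨K, hK⟩ := Nat.exists_mem_closure_of_ge (closedWalkLengths E b : Set ℕ)
  rw [setGcd_closedWalkLengths hsc hdiv hgcd, AddSubmonoid.closure_eq] at hK
  exact ⟨K, hK⟩

lemma RelP.exists_hasWalk_mul (hp : 0 < p) {a b : V} (h : RelP E p a b) {m : ℕ} (hm : 0 < m) :
    ∃ k, HasWalk E (m * k) a b := by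
  obtain ⟨w, L, hw, hpL⟩ := h
  obtain ⟨K, hK⟩ := exists_forall_ge_hasWalk_self hsc hdiv hgcd b
  have hle : K + L ≤ m * (p * (K + L)) := by
    rw [← mul_assoc]
    exact Nat.le_mul_of_pos_left _ (Nat.mul_pos hm hp)
  have hpad : HasWalk E (m * (p * (K + L)) - L) b b :=
    hK _ (by omega) (Nat.dvd_sub (dvd_mul_of_dvd_right (dvd_mul_right p _) m) hpL)
  refine ⟨p * (K + L), ?_⟩
  have := HasWalk.append ⟨w, hw⟩ hpad
  rwa [Nat.add_sub_cancel' (by omega)] at this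

end Walks

section Network

variable {n : ℕ} {N : Fin n → Finset (Fin n)}

lemma cbn_iterate_eq_true_iff {m : ℕ} {x : Fin n → Bool} {i : Fin n} :
    (cbn N)^[m] x i = true ↔ ∀ j, HasWalk (depEdge N) m j i → x j = true := by
  induction m generalizing x i with
  | zero => simp [hasWalk_zero]
  | succ m ih =>
    rw [iterate_succ_apply, ih]
    have hinf (j : Fin n) : (N j).inf x = true ↔ ∀ k ∈ N j, x k = true :=
      Finset.inf_eq_top_iff x (N j)
    simp only [hasWalk_succ, cbn, depEdge, hinf]
    exact ⟨fun h k ⟨b, hkb, hb⟩ => h b hb k hkb, fun h b hb k hkb => h k ⟨b, hkb, hb⟩⟩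

lemma cbn_iterate_apply_eq_self (hne : ∀ i, (N i).Nonempty) {m : ℕ} {x : Fin n → Bool}
    {i : Fin n} (h : ∀ j, HasWalk (depEdge N) m j i → x j = x i) : (cbn N)^[m] x i = x i := by
  obtain ⟨j, hj⟩ := exists_hasWalk_of_forall_exists_adj hne m i
  rw [Bool.eq_iff_iff, cbn_iterate_eq_true_iff]
  exact ⟨fun hall => h j hj ▸ hall j hj, fun hi k hk => (h k hk).trans hi⟩

lemma Function.IsPeriodicPt.cbn_eq_true_of_hasWalk {m k : ℕ} {x : Fin n → Bool}
    (hx : IsPeriodicPt (cbn N) m x) {a b : Fin n} (hab : HasWalk (depEdge N) (m * k) a b)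
    (hb : x b = true) : x a = true := by
  rw [← (hx.mul_const k).eq] at hb
  exact cbn_iterate_eq_true_iff.1 hb a hab

end Network

/-- A state lies in a periodic orbit of a conjunctive Boolean network iff it is
constant on each equivalence class `U_k` of the relation `∼_{p*}` (where `p*` is the
loop number of the strongly connected dependency graph). -/
theorem periodic_iff_constant_on_components {n : ℕ} (N : Fin n → Finset (Fin n))
    (hne : ∀ i, (N i).Nonempty) (hsc : StronglyConnected (depEdge N))
    (p : ℕ) (hp : 0 < p)
    (hdiv : ∀ w ℓ, IsCycle (depEdge N) w ℓ → p ∣ ℓ)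
    (hgcd : ∀ q, (∀ w ℓ, IsCycle (depEdge N) w ℓ → q ∣ ℓ) → q ∣ p)
    (x : Fin n → Bool) :
    (∃ m, 0 < m ∧ (cbn N)^[m] x = x) ↔
      ∀ i j, RelP (depEdge N) p i j → x i = x j := by
  constructor
  · rintro ⟨m, hm, hx⟩ i j hij
    have transport : ∀ a b, RelP (depEdge N) p a b → x b = true → x a = true := fun a b hab => by
      obtain ⟨k, hk⟩ := hab.exists_hasWalk_mul hsc hdiv hgcd hp hm
      exact IsPeriodicPt.cbn_eq_true_of_hasWalk hx hk
    exact Bool.eq_iff_iff.2 ⟨transport j i (hij.symm hsc hdiv), transport i j hij⟩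
  · intro hconst
    exact ⟨p, hp, funext fun i =>
      cbn_iterate_apply_eq_self hne fun j ⟨w, hw⟩ => hconst j i ⟨w, p, hw, dvd_rfl⟩⟩
end

section
/- Let f be a conjunctive Boolean network with strongly connected dependency graph D, loop number p*, and components U_0,…,U_{p*−1}. Let x be a state in a periodic orbit identified with the necklace y₀y₁…y_{p*−1}, and let x' be obtained from x by negating a single entry, lying in U_0. If |U_0| > 1, then the trajectory starting from x' enters the periodic orbit identified with the necklace 0·y₁…y_{p*−1}. -/
section walkAux
variable {V : Type*} {E : V → V → Prop}

lemma isWalk_nil (a : V) : IsWalk E (fun _ => a) 0 a a :=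
  ⟨rfl, rfl, fun i h => absurd h (Nat.not_lt_zero i)⟩

lemma isWalk_concat {w1 w2 : ℕ → V} {s t : ℕ} {a b c : V}
    (h1 : IsWalk E w1 s a b) (h2 : IsWalk E w2 t b c) :
    ∃ w, IsWalk E w (s + t) a c := by
  refine ⟨fun i => if i ≤ s then w1 i else w2 (i - s), by simpa using h1.1, ?_, ?_⟩
  · by_cases ht : t = 0
    · subst ht
      simpa using h1.2.1.trans (h2.1.symm.trans h2.2.1)
    · have : ¬ (s + t ≤ s) := by omega
      simp only [this, if_false]
      have : s + t - s = t := by omega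
      rw [this, h2.2.1]
  · intro i hi
    rcases lt_or_ge i s with h | h
    · have h1' : i ≤ s := h.le
      have h2' : i + 1 ≤ s := h
      simp only [h1', h2', if_true]
      exact h1.2.2 i h
    · have key : (if i ≤ s then w1 i else w2 (i - s)) = w2 (i - s) := by
        rcases eq_or_lt_of_le h with h' | h'
        · have : i ≤ s := h'.symm.le
          simp only [this, if_true]
          rw [← h', Nat.sub_self, h2.1, h1.2.1]
        · have : ¬ i ≤ s := by omega
          simp only [this, if_false]
      beta_reduce
      rw [key]
      have : ¬ (i + 1 ≤ s) := by omega
      simp only [this, if_false]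
      have he : i + 1 - s = (i - s) + 1 := by omega
      rw [he]
      exact h2.2.2 (i - s) (by omega)

lemma closedWalk_dvd {p : ℕ} (hdiv : ∀ w ℓ, IsCycle E w ℓ → p ∣ ℓ) :
    ∀ ℓ (w : ℕ → V) (a : V), IsWalk E w ℓ a a → p ∣ ℓ := by
  intro ℓ
  induction ℓ using Nat.strong_induction_on with
  | _ ℓ ih =>
    intro w a hw
    by_cases hinj : ∀ i j, i < ℓ → j < ℓ → w i = w j → i = j
    · rcases Nat.eq_zero_or_pos ℓ with h0 | hpos
      · simp [h0]
      · exact hdiv w ℓ ⟨hpos, hw.2.1.trans hw.1.symm, hw.2.2, hinj⟩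
    · push_neg at hinj
      obtain ⟨i, j, hi, hj, heq, hne⟩ := hinj
      wlog hij : i < j generalizing i j
      · exact this j i hj hi heq.symm (Ne.symm hne) (by omega)
      have d1 : p ∣ (j - i) := by
        apply ih (j - i) (by omega) (fun s => w (i + s)) (w i)
        refine ⟨by simp, ?_, ?_⟩
        · show w (i + (j - i)) = w i
          have : i + (j - i) = j := by omega
          rw [this]; exact heq.symm
        · intro s hs
          show E (w (i + s)) (w (i + (s + 1)))
          have he : i + (s + 1) = (i + s) + 1 := by omega
          rw [he]
          exact hw.2.2 (i + s) (by omega)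
      have d2 : p ∣ (ℓ - (j - i)) := by
        apply ih (ℓ - (j - i)) (by omega)
          (fun s => if s ≤ i then w s else w (s + (j - i))) a
        refine ⟨by simp [hw.1], ?_, ?_⟩
        · beta_reduce
          have hgt : ¬ (ℓ - (j - i) ≤ i) := by omega
          simp only [hgt, if_false]
          have : ℓ - (j - i) + (j - i) = ℓ := by omega
          rw [this]; exact hw.2.1
        · intro s hs
          beta_reduce
          rcases lt_trichotomy s i with h | h | h
          · have e1 : s ≤ i := h.le
            have e2 : s + 1 ≤ i := h
            simp only [e1, e2, if_true]
            exact hw.2.2 s (by omega)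
          · subst h
            have e1 : s ≤ s := le_refl s
            have e2 : ¬ (s + 1 ≤ s) := by omega
            simp only [e1, e2, if_true, if_false]
            rw [heq]
            have : s + 1 + (j - s) = j + 1 := by omega
            rw [this]
            exact hw.2.2 j (by omega)
          · have e1 : ¬ (s ≤ i) := by omega
            have e2 : ¬ (s + 1 ≤ i) := by omega
            simp only [e1, e2, if_false]
            have : s + 1 + (j - i) = (s + (j - i)) + 1 := by omega
            rw [this]
            exact hw.2.2 (s + (j - i)) (by omega)
      have : (j - i) + (ℓ - (j - i)) = ℓ := by omega
      exact this ▸ dvd_add d1 d2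

lemma isWalk_repeat {w : ℕ → V} {t : ℕ} {a : V} (h : IsWalk E w t a a) :
    ∀ k, ∃ w', IsWalk E w' (k * t) a a := by
  intro k
  induction k with
  | zero =>
    refine ⟨fun _ => a, ?_⟩
    rw [zero_mul]
    exact isWalk_nil a
  | succ k ih =>
    obtain ⟨w', hw'⟩ := ih
    have := isWalk_concat hw' h
    rwa [show k * t + t = (k+1) * t by ring] at this

/-- Closed walks at `i0` realize every sufficiently large multiple of `p`. -/
lemma exists_closed_gap {p : ℕ} (hp : 0 < p) (hsc : StronglyConnected E)
    (hdiv : ∀ w ℓ, IsCycle E w ℓ → p ∣ ℓ)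
    (hgcd : ∀ q, (∀ w ℓ, IsCycle E w ℓ → q ∣ ℓ) → q ∣ p)
    (i0 : V) :
    ∃ K, ∀ k ≥ K, ∃ w, IsWalk E w (k * p) i0 i0 := by
  set C : ℕ → Prop := fun t => ∃ w, IsWalk E w t i0 i0 with hC
  have hC0 : C 0 := ⟨fun _ => i0, isWalk_nil i0⟩
  have hCadd : ∀ {s t}, C s → C t → C (s + t) := by
    rintro s t ⟨w1, h1⟩ ⟨w2, h2⟩; exact isWalk_concat h1 h2
  have hCp : ∀ t, C t → p ∣ t := by
    rintro t ⟨w, hw⟩; exact closedWalk_dvd hdiv t w i0 hw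
  have hCmul : ∀ t, C t → ∀ k, C (k * t) := by
    rintro t ⟨w, hw⟩ k; exact isWalk_repeat hw k
  set G : AddSubgroup ℤ :=
    { carrier := {z | ∃ a b : ℕ, C a ∧ C b ∧ (a : ℤ) - b = z}
      zero_mem' := ⟨0, 0, hC0, hC0, by ring⟩
      add_mem' := by
        rintro z1 z2 ⟨a1, b1, ha1, hb1, e1⟩ ⟨a2, b2, ha2, hb2, e2⟩
        exact ⟨a1 + a2, b1 + b2, hCadd ha1 ha2, hCadd hb1 hb2, by push_cast; omega⟩
      neg_mem' := by
        rintro z ⟨a, b, ha, hb, e⟩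
        exact ⟨b, a, hb, ha, by omega⟩ } with hG
  obtain ⟨g, hg⟩ := Int.subgroup_cyclic G
  have hmemG : ∀ z : ℤ, z ∈ G ↔ ∃ a b : ℕ, C a ∧ C b ∧ (a : ℤ) - b = z := fun z => Iff.rfl
  have hmem : ∀ z : ℤ, z ∈ G ↔ g ∣ z := by
    intro z
    rw [hg, AddSubgroup.mem_closure_singleton]
    constructor
    · rintro ⟨m, rfl⟩; exact ⟨m, by rw [mul_comm]; simp [zsmul_eq_mul]⟩
    · rintro ⟨m, rfl⟩; exact ⟨m, by simp [zsmul_eq_mul, mul_comm]⟩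
  have hcycG : ∀ w ℓ, IsCycle E w ℓ → (ℓ : ℤ) ∈ G := by
    intro w ℓ hc
    obtain ⟨w1, s, hw1⟩ := hsc i0 (w 0)
    obtain ⟨w2, t, hw2⟩ := hsc (w 0) i0
    have hcyc : IsWalk E w ℓ (w 0) (w 0) := ⟨rfl, hc.2.1, hc.2.2.1⟩
    obtain ⟨wa, hwa⟩ := isWalk_concat hw1 hcyc
    obtain ⟨wA, hwA⟩ := isWalk_concat hwa hw2
    obtain ⟨wB, hwB⟩ := isWalk_concat hw1 hw2
    have hA : C (s + ℓ + t) := ⟨wA, hwA⟩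
    have hB : C (s + t) := ⟨wB, hwB⟩
    exact (hmemG _).mpr ⟨s + ℓ + t, s + t, hA, hB, by push_cast; ring⟩
  have hgp : g.natAbs ∣ p := by
    apply hgcd
    intro w ℓ hc
    have := (hmem _).mp (hcycG w ℓ hc)
    simpa using Int.natAbs_dvd_natAbs.mpr this
  have hpg : (p : ℤ) ∣ g := by
    have hgG : g ∈ G := by rw [hmem]
    obtain ⟨a, b, ha, hb, e⟩ := (hmemG g).mp hgG
    obtain ⟨ca, hca⟩ := hCp a ha
    obtain ⟨cb, hcb⟩ := hCp b hb
    refine ⟨(ca : ℤ) - cb, ?_⟩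
    rw [← e, hca, hcb]; push_cast; ring
  have hpnat : g.natAbs = p :=
    Nat.dvd_antisymm hgp (by simpa using Int.natAbs_dvd_natAbs.mpr hpg)
  have hpG : (p : ℤ) ∈ G := by
    rw [hmem]
    exact (Int.natAbs_dvd).mp (hpnat ▸ dvd_refl _)
  obtain ⟨a, b, ha, hb, e⟩ := (hmemG _).mp hpG
  have hab : a = b + p := by omega
  obtain ⟨c, hc⟩ := hCp b hb
  refine ⟨c * c, ?_⟩
  intro k hk
  rcases Nat.eq_zero_or_pos c with hc0 | hc0
  · have hb0 : b = 0 := by rw [hc, hc0, mul_zero]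
    have hap : a = p := by omega
    have := hCmul a ha k
    rwa [hap] at this
  · set r := k % c with hr
    have hrc : r < c := Nat.mod_lt k hc0
    have hqc : c ≤ k / c := (Nat.le_div_iff_mul_le hc0).mpr (by nlinarith)
    obtain ⟨d, hd⟩ : ∃ d, k / c = d + r := ⟨k / c - r, by omega⟩
    have hk' : k = c * (d + r) + r := by
      have hq : c * (k / c) + k % c = k := Nat.div_add_mod k c
      have h2 : c * (k / c) = c * (d + r) := by rw [hd]
      omega
    have h3 : C (d * b + r * a) := hCadd (hCmul b hb d) (hCmul a ha r)
    have he : d * b + r * a = k * p := by rw [hab, hc, hk']; ring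
    rwa [he] at h3

end walkAux

lemma inf_bool_false {α : Type*} (s : Finset α) (f : α → Bool) :
    s.inf f = false ↔ ∃ j ∈ s, f j = false := by
  rw [← not_iff_not]
  push_neg
  simp only [Bool.not_eq_false]
  constructor
  · intro h j hj
    have := Finset.inf_le hj (f := f)
    rw [h] at this
    exact le_antisymm (by simp) this
  · intro h
    have : s.inf f = ⊤ := by
      rw [Finset.inf_eq_top_iff]
      intro j hj; exact h j hj
    exact this

lemma cbn_iter_false_iff {n : ℕ} (N : Fin n → Finset (Fin n)) (x : Fin n → Bool) :
    ∀ (t : ℕ) (i : Fin n), ((cbn N)^[t] x i = false ↔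
      ∃ k w, IsWalk (depEdge N) w t k i ∧ x k = false) := by
  intro t
  induction t with
  | zero =>
    intro i
    simp only [Function.iterate_zero, id_eq]
    constructor
    · intro h
      exact ⟨i, fun _ => i, ⟨rfl, rfl, fun s hs => absurd hs (Nat.not_lt_zero s)⟩, h⟩
    · rintro ⟨k, w, ⟨h0, hℓ, -⟩, hk⟩
      rwa [← h0, hℓ] at hk
  | succ t ih =>
    intro i
    rw [Function.iterate_succ_apply']
    show (N i).inf ((cbn N)^[t] x) = false ↔ _
    rw [inf_bool_false]
    constructor
    · rintro ⟨j, hj, hjf⟩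
      obtain ⟨k, w, hw, hk⟩ := (ih j).mp hjf
      refine ⟨k, fun s => if s = t + 1 then i else w s, ⟨?_, ?_, ?_⟩, hk⟩
      · simp [hw.1]
      · simp
      · intro s hs
        rcases Nat.lt_or_ge s t with h | h
        · have e1 : ¬ (s = t + 1) := by omega
          have e2 : ¬ (s + 1 = t + 1) := by omega
          simp only [e1, e2, if_false]
          exact hw.2.2 s h
        · have hst : s = t := by omega
          subst hst
          have e1 : ¬ (s = s + 1) := by omega
          simp only [e1, if_false, if_pos rfl]
          rw [hw.2.1]
          exact hj
    · rintro ⟨k, w, hw, hk⟩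
      refine ⟨w t, ?_, (ih (w t)).mpr ⟨k, w, ⟨hw.1, rfl, fun s hs => hw.2.2 s (by omega)⟩, hk⟩⟩
      have := hw.2.2 t (by omega)
      rw [hw.2.1] at this
      exact this

/-- Single-entry perturbation on a non-singleton component: if `x` is a periodic state
and `x'` negates the single entry `i0` of `x`, where the component `U_0 = [i0]` has
more than one vertex, then the trajectory from `x'` enters the periodic orbit whose
necklace has `0` on the component of `i0` and the unchanged values elsewhere. -/
theorem perturbation_large_component {n : ℕ} (N : Fin n → Finset (Fin n))
    (hne : ∀ i, (N i).Nonempty) (hsc : StronglyConnected (depEdge N))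
    (p : ℕ) (hp : 0 < p)
    (hdiv : ∀ w ℓ, IsCycle (depEdge N) w ℓ → p ∣ ℓ)
    (hgcd : ∀ q, (∀ w ℓ, IsCycle (depEdge N) w ℓ → q ∣ ℓ) → q ∣ p)
    (x x' : Fin n → Bool) (i0 : Fin n)
    (hx : ∃ m, 0 < m ∧ (cbn N)^[m] x = x)
    (hflip : x' i0 = !(x i0) ∧ ∀ j, j ≠ i0 → x' j = x j)
    (hbig : ∃ j, j ≠ i0 ∧ RelP (depEdge N) p j i0) :
    ∃ T : ℕ, ∀ j : Fin n,
      (RelP (depEdge N) p j i0 → (cbn N)^[T] x' j = false) ∧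
      (¬ RelP (depEdge N) p j i0 → (cbn N)^[T] x' j = x j) := by
  classical
  obtain ⟨m, hm, hxm⟩ := hx
  obtain ⟨j', hj'ne, hj'rel⟩ := hbig
  obtain ⟨K, hK⟩ := exists_closed_gap hp hsc hdiv hgcd i0
  choose W L hWL using fun b => hsc i0 b
  have hLdvd : ∀ j, RelP (depEdge N) p j i0 → p ∣ L j := by
    rintro j ⟨w2, ℓ2, hw2, hpℓ2⟩
    obtain ⟨w3, h3⟩ := isWalk_concat (hWL j) hw2
    have hsum := closedWalk_dvd hdiv _ w3 i0 h3
    have := Nat.dvd_sub hsum hpℓ2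
    simpa using this
  have hper : ∀ s, (cbn N)^[m * s] x = x := fun s => by
    rw [Function.iterate_mul]; exact Function.iterate_fixed hxm s
  set B := Finset.univ.sup L with hB
  have hLB : ∀ j, L j ≤ B := fun j => Finset.le_sup (Finset.mem_univ j)
  -- a false source in the component of i0
  have hsrc : ∃ k0 ℓ0 w0, IsWalk (depEdge N) w0 ℓ0 k0 i0 ∧ p ∣ ℓ0 ∧ x' k0 = false := by
    rcases Bool.eq_false_or_eq_true (x i0) with hxi | hxi
    · refine ⟨i0, 0, fun _ => i0, isWalk_nil i0, dvd_zero p, ?_⟩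
      rw [hflip.1, hxi]
      rfl
    · obtain ⟨w2, ℓ2, hw2, hpℓ2⟩ := hj'rel
      refine ⟨j', ℓ2, w2, hw2, hpℓ2, ?_⟩
      rw [hflip.2 j' hj'ne]
      -- show x j' = false via propagation from i0 over a long walk
      have hpL : p ∣ L j' := hLdvd j' ⟨w2, ℓ2, hw2, hpℓ2⟩
      set s0 := L j' + K * p + 1 with hs0
      set M := m * (p * s0) with hM
      have hpM : p ∣ M := ⟨m * s0, by rw [hM]; ring⟩
      have hMbig : s0 ≤ M := by
        have h1 : 1 * (1 * s0) ≤ m * (p * s0) :=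
          Nat.mul_le_mul hm (Nat.mul_le_mul hp (le_refl s0))
        simpa using h1
      obtain ⟨k1, hk1⟩ := Nat.dvd_sub hpM hpL
      have hk1K : K ≤ k1 := by
        have hZbig : K * p + 1 ≤ M - L j' := by omega
        by_contra hcon
        push_neg at hcon
        have h1 : p * k1 ≤ p * K := Nat.mul_le_mul_left p hcon.le
        have h2 : p * K = K * p := mul_comm p K
        omega
      obtain ⟨wz, hz⟩ := hK k1 hk1K
      obtain ⟨wc, hc⟩ := isWalk_concat hz (hWL j')
      have hlen : k1 * p + L j' = M := by
        have : k1 * p = p * k1 := mul_comm _ _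
        omega
      rw [hlen] at hc
      have hMx : (cbn N)^[M] x = x := hper (p * s0)
      have : (cbn N)^[M] x j' = false :=
        (cbn_iter_false_iff N x M j').mpr ⟨i0, wc, hc, hxi⟩
      rwa [hMx] at this
  obtain ⟨k0, ℓ0, w0, hw0, hpℓ0, hk0f⟩ := hsrc
  set sT := ℓ0 + B + K * p + 1 with hsT
  refine ⟨m * (p * sT), fun j => ⟨?_, ?_⟩⟩
  · -- j in the component of i0 : becomes false
    intro hj
    set T := m * (p * sT) with hT
    have hpT : p ∣ T := ⟨m * sT, by rw [hT]; ring⟩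
    have hTbig : sT ≤ T := by
      have h1 : 1 * (1 * sT) ≤ m * (p * sT) :=
        Nat.mul_le_mul hm (Nat.mul_le_mul hp (le_refl sT))
      simpa using h1
    have hpL : p ∣ L j := hLdvd j hj
    have hdZ : p ∣ T - ℓ0 - L j := Nat.dvd_sub (Nat.dvd_sub hpT hpℓ0) hpL
    obtain ⟨k2, hk2⟩ := hdZ
    have hLjB : L j ≤ B := hLB j
    have hℓ0T : ℓ0 + L j + K * p + 1 ≤ T := by omega
    have hk2K : K ≤ k2 := by
      by_contra hcon
      push_neg at hcon
      have h1 : p * k2 ≤ p * K := Nat.mul_le_mul_left p hcon.le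
      have h2 : p * K = K * p := mul_comm p K
      omega
    obtain ⟨wz, hz⟩ := hK k2 hk2K
    obtain ⟨wc, hc⟩ := isWalk_concat hw0 hz
    obtain ⟨wc2, hc2⟩ := isWalk_concat hc (hWL j)
    have hlen : ℓ0 + k2 * p + L j = T := by
      have : k2 * p = p * k2 := mul_comm _ _
      omega
    rw [hlen] at hc2
    exact (cbn_iter_false_iff N x' T j).mpr ⟨k0, wc2, hc2, hk0f⟩
  · -- j outside the component of i0 : returns to x j
    intro hj
    set T := m * (p * sT) with hT
    have hpT : p ∣ T := ⟨m * sT, by rw [hT]; ring⟩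
    have hagree : ∀ (k : Fin n) (w : ℕ → Fin n), IsWalk (depEdge N) w T k j → x' k = x k := by
      intro k w hw
      rcases eq_or_ne k i0 with rfl | hne
      · exfalso
        apply hj
        obtain ⟨w2, ℓ2, hw2⟩ := hsc j k
        obtain ⟨w3, h3⟩ := isWalk_concat hw hw2
        have hsum := closedWalk_dvd hdiv _ w3 k h3
        have hpℓ2 : p ∣ ℓ2 := by
          have := Nat.dvd_sub hsum hpT
          simpa using this
        exact ⟨w2, ℓ2, hw2, hpℓ2⟩
      · exact hflip.2 k hne
    have hxj : (cbn N)^[T] x j = x j := by rw [hper (p * sT)]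
    have hiff : ((cbn N)^[T] x' j = false) ↔ ((cbn N)^[T] x j = false) := by
      rw [cbn_iter_false_iff, cbn_iter_false_iff]
      constructor
      · rintro ⟨k, w, hw, hk⟩
        exact ⟨k, w, hw, by rw [← hagree k w hw]; exact hk⟩
      · rintro ⟨k, w, hw, hk⟩
        exact ⟨k, w, hw, by rw [hagree k w hw]; exact hk⟩
    have hfin : ((cbn N)^[T] x' j = false) ↔ (x j = false) := by rw [hiff, hxj]
    cases hb : (cbn N)^[T] x' j with
    | false => exact (hfin.mp hb).symm
    | true =>
      cases hv : x j with
      | false =>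
        have h2 := hfin.mpr hv
        rw [hb] at h2
        exact absurd h2 (by simp)
      | true => rfl
end
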